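/- For a connected graph G on n ≥ 3 vertices, γ₃(G) + κ(G) = 2n − 1 if and only if G is isomorphic to K₃. -/

import Mathlib

/-- `S` is a 3-dominating set of `G`: every vertex outside `S`
has at least three neighbors in `S`. -/
def ThreeDominating {V : Type*} (G : SimpleGraph V) (S : Finset V) : Prop :=
  ∀ v ∉ S, 3 ≤ {u | u ∈ S ∧ G.Adj v u}.ncard

/-- The 3-domination number: minimum cardinality of a 3-dominating set. -/
noncomputable def gamma3 {V : Type*} [Fintype V] (G : SimpleGraph V) : ℕ :=
  sInf {k | ∃ S : Finset V, ThreeDominating G S ∧ S.card = k}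

/-- Vertex connectivity: minimum number of vertices whose removal
results in a disconnected or trivial graph. -/
noncomputable def kappa {V : Type*} [Fintype V] [DecidableEq V] (G : SimpleGraph V) : ℕ :=
  sInf {k | ∃ S : Finset V, S.card = k ∧
    (((Sᶜ : Finset V)).card ≤ 1 ∨ ¬ (G.induce (↑(Sᶜ : Finset V) : Set V)).Connected)}

/-! Trivially `γ₃(G) ≤ n` and `κ(G) ≤ n - 1`, so the sum is `2n - 1` only when both bounds are
attained. A non-adjacent pair `a, b` gives `κ(G) ≤ n - 2` (delete every other vertex), so
`κ(G) = n - 1` forces `G = Kₙ`; in `Kₙ` any three vertices are 3-dominating, so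
`γ₃(Kₙ) = 3`, and this equals `n` only for `n = 3`. -/

open Finset SimpleGraph

section

variable {V : Type*}

lemma ThreeDominating.three_le_card {G : SimpleGraph V} {S : Finset V} (hS : ThreeDominating G S)
    {v : V} (hv : v ∉ S) : 3 ≤ #S :=
  calc 3 ≤ {u | u ∈ S ∧ G.Adj v u}.ncard := hS v hv
    _ ≤ (S : Set V).ncard := Set.ncard_le_ncard (fun _ hu => hu.1) S.finite_toSet
    _ = #S := Set.ncard_coe_finset S

lemma threeDominating_top {S : Finset V} (hS : 3 ≤ #S) : ThreeDominating ⊤ S := by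
  intro v hv
  have hnbrs : {u | u ∈ S ∧ (⊤ : SimpleGraph V).Adj v u} = (S : Set V) := by
    ext u
    exact ⟨fun h => h.1, fun hu => ⟨hu, top_adj v u |>.mpr fun h => hv (h ▸ hu)⟩⟩
  rwa [hnbrs, Set.ncard_coe_finset]

variable [Fintype V]

lemma gamma3_le_card (G : SimpleGraph V) : gamma3 G ≤ Fintype.card V :=
  Nat.sInf_le ⟨univ, fun v hv => absurd (mem_univ v) hv, card_univ⟩

lemma gamma3_top (hn : 3 ≤ Fintype.card V) : gamma3 (⊤ : SimpleGraph V) = 3 := by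
  obtain ⟨S, -, hS⟩ := exists_subset_card_eq (s := (univ : Finset V)) (n := 3) (by simpa)
  refine le_antisymm (Nat.sInf_le ⟨S, threeDominating_top hS.ge, hS⟩) ?_
  refine le_csInf ⟨3, S, threeDominating_top hS.ge, hS⟩ ?_
  rintro k ⟨T, hT, rfl⟩
  by_cases hall : ∀ v, v ∈ T
  · simpa [eq_univ_iff_forall.mpr hall]
  · obtain ⟨v, hv⟩ := not_forall.mp hall
    exact hT.three_le_card hv

variable [DecidableEq V]

lemma kappa_le_card_sub_one [Nonempty V] (G : SimpleGraph V) : kappa G ≤ Fintype.card V - 1 := by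
  obtain ⟨v⟩ := ‹Nonempty V›
  refine Nat.sInf_le ⟨{v}ᶜ, ?_, Or.inl ?_⟩
  · rw [card_compl, card_singleton]
  · rw [compl_compl, card_singleton]

lemma kappa_le_card_sub_two {G : SimpleGraph V} {a b : V} (hab : a ≠ b) (hnadj : ¬ G.Adj a b) :
    kappa G ≤ Fintype.card V - 2 := by
  refine Nat.sInf_le ⟨{a, b}ᶜ, ?_, Or.inr ?_⟩
  · rw [card_compl, card_pair hab]
  rw [compl_compl]
  have : Nontrivial (({a, b} : Finset V) : Set V) :=
    ⟨⟨⟨a, by simp⟩, ⟨b, by simp⟩, fun h => hab (congrArg Subtype.val h)⟩⟩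
  have hnadj' : ¬ G.Adj b a := fun h => hnadj h.symm
  have hbot : G.induce (({a, b} : Finset V) : Set V) = ⊥ := by
    ext ⟨x, hx⟩ ⟨y, hy⟩
    simp only [coe_insert, coe_singleton, Set.mem_insert_iff, Set.mem_singleton_iff] at hx hy
    rcases hx with rfl | rfl <;> rcases hy with rfl | rfl <;> simp [hnadj, hnadj']
  rw [hbot]
  exact not_connected_bot

lemma eq_top_of_card_sub_one_le_kappa {G : SimpleGraph V} (hn : 2 ≤ Fintype.card V)
    (hk : Fintype.card V - 1 ≤ kappa G) : G = ⊤ := by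
  ext a b
  refine ⟨fun h => top_adj a b |>.mpr h.ne, fun hab => ?_⟩
  by_contra hnadj
  have := kappa_le_card_sub_two (top_adj a b |>.mp hab) hnadj
  omega

lemma kappa_top [Nonempty V] : kappa (⊤ : SimpleGraph V) = Fintype.card V - 1 := by
  refine le_antisymm (kappa_le_card_sub_one ⊤) (le_csInf ⟨_, univ, rfl, Or.inl (by simp)⟩ ?_)
  rintro k ⟨S, rfl, hS⟩
  by_contra! hlt
  have hcompl : 2 ≤ #Sᶜ := by rw [card_compl]; omega
  have : Nonempty ((Sᶜ : Finset V) : Set V) := by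
    obtain ⟨v, hv⟩ := card_pos.mp (by omega : 0 < #Sᶜ)
    exact ⟨⟨v, hv⟩⟩
  rcases hS with hsmall | hdisconn
  · omega
  · exact hdisconn (by simp)

end

theorem stmt_12_general {V : Type*} [Fintype V] [DecidableEq V] (G : SimpleGraph V)
    (hn : 3 ≤ Fintype.card V) :
    gamma3 G + kappa G = 2 * Fintype.card V - 1 ↔
      Nonempty (G ≃g (⊤ : SimpleGraph (Fin 3))) := by
  have : Nonempty V := Fintype.card_pos_iff.mp (by omega)
  constructor
  · intro hsum
    have hγ := gamma3_le_card G
    have hκ := kappa_le_card_sub_one G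
    obtain rfl : G = ⊤ := eq_top_of_card_sub_one_le_kappa (by omega) (by omega)
    have hcard : Fintype.card V = 3 := by rw [gamma3_top hn] at hγ hsum; omega
    exact ⟨Iso.completeGraph (Fintype.equivFinOfCardEq hcard)⟩
  · rintro ⟨e⟩
    obtain rfl := eq_top_of_isIndContained_top ⟨e.toEmbedding⟩
    have hcard : Fintype.card V = 3 := by simpa using Fintype.card_congr e.toEquiv
    rw [gamma3_top hn, kappa_top, hcard]

theorem stmt_12 {V : Type*} [Fintype V] [DecidableEq V] (G : SimpleGraph V)
    (hconn : G.Connected) (hn : 3 ≤ Fintype.card V) :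
    gamma3 G + kappa G = 2 * Fintype.card V - 1 ↔
      Nonempty (G ≃g (⊤ : SimpleGraph (Fin 3))) :=
  stmt_12_general G hn
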